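/- Let λ ⊇ μ be partitions with at most r parts (padded by zeros) and f = (f_1,…,f_r) nonnegative integers. Consider the acyclic digraph with vertex set ℤ × ℤ_{≥0} and, for every vertex (s,t) with t ≥ 1, a vertical edge from (s,t) to (s,t−1) of weight 1 and a diagonal edge from (s,t) to (s−1,t−1) of weight z_t + b_{t−s}. Set u_i = (λ_i − i, f_i) and v_i = (μ_i − i, 0) for i = 1,…,r. Then s̃_{λ/μ,f}(z|b) = Σ_{(P_1,…,P_r)} ∏_{i=1}^r w(P_i), where the sum is over all r-tuples of directed paths P_i from u_i to v_i that are pairwise vertex-disjoint, and w(P) is the product of the weights of the edges of P. -/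

import Mathlib

open Finset

noncomputable section

variable {R : Type*} [CommRing R]

/-- The formal power series `1/(1 - x·u)`. -/
def geomSeries (x : R) : PowerSeries R := PowerSeries.mk fun m => x ^ m

/-- `e_u^{[k]}(c)`: the power series `∏_{i=1}^k (1 + c_i u)` for `k ≥ 0`, and
`∏_{i=1}^{-k} (1 - c_i u)⁻¹` for `k < 0`.  The sequence `c` is read at indices `1, 2, …`. -/
def eSer (k : ℤ) (c : ℕ → R) : PowerSeries R :=
  if 0 ≤ k then ∏ i ∈ Finset.range k.toNat, (1 + PowerSeries.C (c (i + 1)) * PowerSeries.X)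
  else ∏ i ∈ Finset.range (-k).toNat, geomSeries (c (i + 1))

/-- `q_u(x) = ∏_{i=1}^n (1 + x_i u)/(1 - x_i u)`, with `n` x-variables. -/
def qSer (n : ℕ) (x : ℕ → R) : PowerSeries R :=
  ∏ i ∈ Finset.range n,
    ((1 + PowerSeries.C (x (i + 1)) * PowerSeries.X) * geomSeries (x (i + 1)))

/-- The coefficient of `u^m` (`m : ℤ`) of a power series; zero when `m < 0`. -/
def coeffZ (m : ℤ) (φ : PowerSeries R) : R :=
  if 0 ≤ m then PowerSeries.coeff m.toNat φ else 0

/-- `q_m^{[ℓ]}(x|c)`: the coefficient of `u^m` in `q_u(x)·e_u^{[ℓ]}(c)`. -/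
def qC (m ℓ : ℤ) (n : ℕ) (x c : ℕ → R) : R := coeffZ m (qSer n x * eSer ℓ c)

/-- `q_m^{[k|ℓ]}(x;z|c)`: the coefficient of `u^m` in `q_u(x)·e_u^{[k]}(z)·e_u^{[ℓ]}(c)`. -/
def qC2 (m k ℓ : ℤ) (n : ℕ) (x z c : ℕ → R) : R :=
  coeffZ m (qSer n x * eSer k z * eSer ℓ c)

/-- `e_m^{[k]}(c)`. -/
def eC (m k : ℤ) (c : ℕ → R) : R := coeffZ m (eSer k c)

/-- `e_m^{[k|ℓ]}(z|c)`: the coefficient of `u^m` in `e_u^{[k]}(z)·e_u^{[ℓ]}(c)`. -/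
def eC2 (m k ℓ : ℤ) (z c : ℕ → R) : R := coeffZ m (eSer k z * eSer ℓ c)

/-- Extension of `b` to all integer indices using the convention `b_{-i} = -b_{i+1}` for
`i ≥ 0`; positive indices are untouched.  This also implements the `⋆` substitution. -/
def bext (b : ℤ → R) : ℤ → R := fun j => if 0 < j then b j else -b (1 - j)

/-- `ε(0) = 1` and `ε(m) = 2·(-1)^m` for `m ≥ 1`. -/
def pfEps (m : ℕ) : ℤ := if m = 0 then 1 else 2 * (-1) ^ m

/-- The subscript `α_i + Σ_{j>i} m_{ij} − Σ_{j<i} m_{ji}` in the Schur–Pfaffian. -/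
def pfIdx {r : ℕ} (α : Fin r → ℤ) (m : Fin r → Fin r → ℕ) (i : Fin r) : ℤ :=
  α i + ∑ j, (if i < j then (m i j : ℤ) else 0) - ∑ j, (if j < i then (m j i : ℤ) else 0)

/-- The Schur–Pfaffian `Pf[c^{(1)}_{α_1} ⋯ c^{(r)}_{α_r}]`, as the (finitely supported) sum
over tuples of nonnegative integers `(m_{ij})_{1 ≤ i < j ≤ r}`. -/
def schurPf {r : ℕ} (c : Fin r → ℤ → R) (α : Fin r → ℤ) : R :=
  ∑ᶠ m ∈ {m : Fin r → Fin r → ℕ | ∀ i j, ¬ i < j → m i j = 0},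
    (∏ i, ∏ j, if i < j then (pfEps (m i j) : R) else 1) * ∏ i, c i (pfIdx α m i)

/-- The alphabet of primed, unmarked and circled numbers. -/
inductive MSTEntry where
  | prime : ℕ → MSTEntry
  | unmarked : ℕ → MSTEntry
  | circ : ℕ → MSTEntry
deriving DecidableEq

namespace MSTEntry

/-- Whether an entry is circled (`1`) or not (`0`). -/
def isCirc : MSTEntry → ℕ
  | circ _ => 1
  | _ => 0

/-- Key realizing the order `1' < 1 < 2' < 2 < ⋯` within each class. -/
def key : MSTEntry → ℕ
  | prime k => 2 * k - 1
  | unmarked k => 2 * k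
  | circ k => k

/-- The numeric value of an entry. -/
def val : MSTEntry → ℕ
  | prime k => k
  | unmarked k => k
  | circ k => k

/-- The total order `1' < 1 < 2' < 2 < ⋯ < 1° < 2° < ⋯` on entries of positive value. -/
def le (a b : MSTEntry) : Prop :=
  a.isCirc < b.isCirc ∨ (a.isCirc = b.isCirc ∧ a.key ≤ b.key)

end MSTEntry

/-- The shifted Young diagram of a strict partition `λ` of length `r`:
boxes `(i, j)` with `1 ≤ i ≤ r` and `i ≤ j ≤ λ_i + i - 1` (rows and columns 1-indexed). -/
def shiftedDiag (r : ℕ) (lam : ℕ → ℕ) : Set (ℕ × ℕ) :=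
  {p | 1 ≤ p.1 ∧ p.1 ≤ r ∧ p.1 ≤ p.2 ∧ p.2 ≤ lam p.1 + p.1 - 1}

/-- `T` is a marked shifted tableau of the flagged strict partition `(λ, f)` whose unmarked
and primed entries have numeric value at most `n` (normalized to `unmarked 0` off the
diagram). -/
def IsMST (n r : ℕ) (lam f : ℕ → ℕ) (T : ℕ × ℕ → MSTEntry) : Prop :=
  (∀ p, p ∉ shiftedDiag r lam → T p = .unmarked 0) ∧
  (∀ p ∈ shiftedDiag r lam, 1 ≤ (T p).val) ∧
  (∀ i j j', (i, j) ∈ shiftedDiag r lam → (i, j') ∈ shiftedDiag r lam → j ≤ j' →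
    (T (i, j)).le (T (i, j'))) ∧
  (∀ i i' j, (i, j) ∈ shiftedDiag r lam → (i', j) ∈ shiftedDiag r lam → i ≤ i' →
    (T (i, j)).le (T (i', j))) ∧
  (∀ i i' j k k', (i, j) ∈ shiftedDiag r lam → (i', j) ∈ shiftedDiag r lam → i < i' →
    T (i, j) = .unmarked k → T (i', j) = .unmarked k' → k < k') ∧
  (∀ i j j' k k', (i, j) ∈ shiftedDiag r lam → (i, j') ∈ shiftedDiag r lam → j < j' →
    T (i, j) = .prime k → T (i, j') = .prime k' → k < k') ∧
  (∀ i j j' k k', (i, j) ∈ shiftedDiag r lam → (i, j') ∈ shiftedDiag r lam → j < j' →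
    T (i, j) = .circ k → T (i, j') = .circ k' → k < k') ∧
  (∀ p ∈ shiftedDiag r lam, (T p).le (.circ (f p.1))) ∧
  (∀ p ∈ shiftedDiag r lam, ∀ k, (T p = .unmarked k ∨ T p = .prime k) → k ≤ n)

/-- The factor of the weight `(xz|b)^T` contributed by the entry at box `p`.  The convention
`b_{-i} = -b_{i+1}` is implemented by `bext`. -/
def mstFactor (x z : ℕ → R) (b : ℤ → R) (p : ℕ × ℕ) : MSTEntry → R
  | .unmarked k => x k + bext b ((p.2 : ℤ) - (p.1 : ℤ))
  | .prime k => x k - bext b ((p.2 : ℤ) - (p.1 : ℤ))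
  | .circ k => z k + bext b ((k : ℤ) + (p.1 : ℤ) - (p.2 : ℤ))

/-- The weight `(xz|b)^T` of a marked shifted tableau. -/
def mstWeight (r : ℕ) (lam : ℕ → ℕ) (x z : ℕ → R) (b : ℤ → R) (T : ℕ × ℕ → MSTEntry) : R :=
  ∏ i ∈ Finset.range r, ∏ j ∈ Finset.range (lam (i + 1)),
    mstFactor x z b (i + 1, i + 1 + j) (T (i + 1, i + 1 + j))

/-- The flagged factorial Q-function `Q_{λ,f}(x;z|b)`, with `n` x-variables. -/
def Qflag (n r : ℕ) (lam f : ℕ → ℕ) (x z : ℕ → R) (b : ℤ → R) : R :=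
  ∑ᶠ T ∈ {T : ℕ × ℕ → MSTEntry | IsMST n r lam f T}, mstWeight r lam x z b T

/-- Ivanov's factorial Q-function `Q_λ(x|b)`: the case of the zero flag (no circled
entries, so the z-variables do not occur). -/
def QIvanov (n r : ℕ) (lam : ℕ → ℕ) (x : ℕ → R) (b : ℤ → R) : R :=
  Qflag n r lam (fun _ => 0) x (fun _ => 0) b

/-- The skew Young diagram `κ/ν`: boxes `(i, j)` with `1 ≤ i ≤ r`, `ν_i < j ≤ κ_i`. -/
def skewDiag (r : ℕ) (kap nu : ℕ → ℕ) : Set (ℕ × ℕ) :=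
  {p | 1 ≤ p.1 ∧ p.1 ≤ r ∧ nu p.1 < p.2 ∧ p.2 ≤ kap p.1}

/-- `t` is a row-strict flagged tableau of `(κ/ν, f)` (normalized to `0` off the diagram). -/
def IsRST (r : ℕ) (kap nu f : ℕ → ℕ) (t : ℕ × ℕ → ℕ) : Prop :=
  (∀ p, p ∉ skewDiag r kap nu → t p = 0) ∧
  (∀ p ∈ skewDiag r kap nu, 1 ≤ t p) ∧
  (∀ i j j', (i, j) ∈ skewDiag r kap nu → (i, j') ∈ skewDiag r kap nu → j < j' →
    t (i, j) < t (i, j')) ∧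
  (∀ i i' j, (i, j) ∈ skewDiag r kap nu → (i', j) ∈ skewDiag r kap nu → i ≤ i' →
    t (i, j) ≤ t (i', j)) ∧
  (∀ p ∈ skewDiag r kap nu, t p ≤ f p.1)

/-- The weight `∏_{e ∈ T} (z_{|e|} + b_{|e| + r(e) - c(e)})` of a row-strict flagged tableau. -/
def rstWeight (r : ℕ) (kap nu : ℕ → ℕ) (z : ℕ → R) (b : ℤ → R) (t : ℕ × ℕ → ℕ) : R :=
  ∏ i ∈ Finset.range r, ∏ j ∈ Finset.range (kap (i + 1) - nu (i + 1)),
    (z (t (i + 1, nu (i + 1) + 1 + j)) +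
      b ((t (i + 1, nu (i + 1) + 1 + j) : ℤ) + ((i : ℤ) + 1) - ((nu (i + 1) : ℤ) + 1 + (j : ℤ))))

/-- The row-strict flagged skew factorial Schur polynomial `s̃_{κ/ν,f}(z|b)`. -/
def sTilde (r : ℕ) (kap nu f : ℕ → ℕ) (z : ℕ → R) (b : ℤ → R) : R :=
  ∑ᶠ t ∈ {t : ℕ × ℕ → ℕ | IsRST r kap nu f t}, rstWeight r kap nu z b t


/-- The edge relation of the lattice-path digraph on `ℤ × ℤ_{≥0}`: from `(s,t)` with
`t ≥ 1` there is a vertical edge to `(s, t-1)` and a diagonal edge to `(s-1, t-1)`. -/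
def LatticeEdge (a c : ℤ × ℕ) : Prop :=
  1 ≤ a.2 ∧ (c = (a.1, a.2 - 1) ∨ c = (a.1 - 1, a.2 - 1))

/-- The weight of an edge from `a` to `c`: `z_t + b_{t-s}` for the diagonal edge with
source `(s,t)`, and `1` for a vertical edge. -/
def edgeWt (z : ℕ → R) (b : ℤ → R) (a c : ℤ × ℕ) : R :=
  if c.1 = a.1 - 1 then z a.2 + b ((a.2 : ℤ) - a.1) else 1

/-- `p` (a list of vertices) is a directed path from `u` to `v`. -/
def IsLatticePath (u v : ℤ × ℕ) (p : List (ℤ × ℕ)) : Prop :=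
  p.head? = some u ∧ p.getLast? = some v ∧ p.Chain' LatticeEdge

/-- The weight of a path: the product of the weights of its edges. -/
def pathWt (z : ℕ → R) (b : ℤ → R) (p : List (ℤ × ℕ)) : R :=
  ((p.zip p.tail).map fun q => edgeWt z b q.1 q.2).prod

/-! Row `i` of a row-strict tableau becomes the lattice path from `(λ_i - i, f_i)` to
`(μ_i - i, 0)` that, at height `h`, stands as many steps right of `μ_i - i` as the row has
entries `≤ h`. As the row strictly increases, the path moves at most one step per level, and an
entry `k` in column `c` becomes the diagonal step from height `k`, of weight `z_k + b_{k+i-c}`.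
Weak increase down the columns says precisely that the path of row `i + 1` stays strictly left
of that of row `i`, i.e. that the paths are vertex-disjoint. Conversely, the entry of a box is
the first height at which the path of its row reaches it. -/

def IsUnitStep (g : ℕ → ℤ) (n : ℕ) : Prop :=
  ∀ k < n, g (k + 1) = g k ∨ g (k + 1) = g k + 1

namespace IsUnitStep

variable {g g' : ℕ → ℤ} {n : ℕ}

lemma monotoneOn (hg : IsUnitStep g n) : MonotoneOn g (Set.Iic n) :=
  monotoneOn_of_le_succ Set.ordConnected_Iic fun k _ _ hk => by
    rw [Order.succ_eq_add_one, Set.mem_Iic] at *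
    rcases hg k hk with h | h <;> omega

lemma mono {m : ℕ} (hg : IsUnitStep g n) (hmn : m ≤ n) : IsUnitStep g m :=
  fun k hk => hg k (hk.trans_le hmn)

lemma add_const (hg : IsUnitStep g n) (d : ℤ) : IsUnitStep (fun k => g k + d) n := fun k hk => by
    simp only
    rcases hg k hk with h | h
    · exact Or.inl (by rw [h])
    · exact Or.inr (by rw [h]; ring)

lemma lt_of_forall_ne (hg : IsUnitStep g n) (hg' : IsUnitStep g' n) (h₀ : g' 0 < g 0)
    (hne : ∀ k ≤ n, g' k ≠ g k) : ∀ k ≤ n, g' k < g k := by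
  intro k hk
  induction k with
  | zero => exact h₀
  | succ k ih =>
    have := ih (by omega)
    have := hne (k + 1) hk
    rcases hg k hk with h | h <;> rcases hg' k hk with h' | h' <;> omega

end IsUnitStep

def stepPath (g : ℕ → ℤ) : ℕ → List (ℤ × ℕ)
  | 0 => [(g 0, 0)]
  | n + 1 => (g (n + 1), n + 1) :: stepPath g n

section StepPath

variable {g g' : ℕ → ℤ} {n n' : ℕ}

lemma stepPath_eq_cons (g : ℕ → ℤ) (n : ℕ) : ∃ l, stepPath g n = (g n, n) :: l := by
  cases n <;> exact ⟨_, rfl⟩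

lemma stepPath_getLast? (g : ℕ → ℤ) (n : ℕ) : (stepPath g n).getLast? = some (g 0, 0) := by
  induction n with
  | zero => rfl
  | succ n ih =>
    obtain ⟨l, hl⟩ := stepPath_eq_cons g n
    rw [stepPath, hl, List.getLast?_cons_cons, ← hl, ih]

lemma mem_stepPath {s : ℤ} {k : ℕ} : (s, k) ∈ stepPath g n ↔ k ≤ n ∧ s = g k := by
  induction n with
  | zero =>
    simp only [stepPath, List.mem_singleton, Prod.mk.injEq, Nat.le_zero]
    exact ⟨fun ⟨h, hk⟩ => ⟨hk, hk ▸ h⟩, fun ⟨hk, h⟩ => ⟨hk ▸ h, hk⟩⟩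
  | succ n ih =>
    simp only [stepPath, List.mem_cons, ih, Prod.mk.injEq]
    constructor
    · rintro (⟨rfl, rfl⟩ | ⟨hk, rfl⟩) <;> omega
    · rintro ⟨hk, rfl⟩
      rcases Nat.lt_or_ge k (n + 1) with hk' | hk'
      · exact Or.inr ⟨by omega, rfl⟩
      · obtain rfl : k = n + 1 := by omega
        exact Or.inl ⟨rfl, rfl⟩

lemma stepPath_eq_stepPath_iff : stepPath g n = stepPath g' n ↔ ∀ k ≤ n, g k = g' k := by
  refine ⟨fun h k hk => ?_, fun h => ?_⟩
  · have hmem : (g k, k) ∈ stepPath g' n := h ▸ mem_stepPath.2 ⟨hk, rfl⟩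
    exact (mem_stepPath.1 hmem).2
  · induction n with
    | zero => simp [stepPath, h 0 le_rfl]
    | succ n ih => rw [stepPath, stepPath, h (n + 1) le_rfl, ih fun k hk => h k (by omega)]

lemma stepPath_disjoint_iff :
    (stepPath g n).Disjoint (stepPath g' n') ↔ ∀ k ≤ n, k ≤ n' → g k ≠ g' k := by
  constructor
  · intro h k hk hk' hgk
    exact h (mem_stepPath.2 ⟨hk, rfl⟩) (mem_stepPath.2 ⟨hk', hgk⟩)
  · rintro h ⟨s, k⟩ hx hx'
    obtain ⟨hk, rfl⟩ := mem_stepPath.1 hx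
    obtain ⟨hk', hgk⟩ := mem_stepPath.1 hx'
    exact h k hk hk' hgk

lemma isLatticePath_stepPath (hg : IsUnitStep g n) :
    IsLatticePath (g n, n) (g 0, 0) (stepPath g n) := by
  refine ⟨by cases n <;> rfl, stepPath_getLast? g n, ?_⟩
  show (stepPath g n).IsChain LatticeEdge
  induction n with
  | zero => exact List.isChain_singleton _
  | succ n ih =>
    obtain ⟨l, hl⟩ := stepPath_eq_cons g n
    rw [stepPath, hl, List.isChain_cons_cons, ← hl]
    refine ⟨⟨by simp, ?_⟩, ih fun k hk => hg k (by omega)⟩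
    rcases hg n (by omega) with h | h
    · exact Or.inl (by simp [h])
    · exact Or.inr (by simp [h])

lemma exists_unitStep_of_isLatticePath {p : List (ℤ × ℕ)} {s s' : ℤ}
    (hp : IsLatticePath (s, n) (s', 0) p) :
    ∃ g, IsUnitStep g n ∧ g n = s ∧ g 0 = s' ∧ p = stepPath g n := by
  induction p generalizing n s with
  | nil => simp [IsLatticePath] at hp
  | cons x q ih =>
    obtain ⟨hhead, hlast, hchain⟩ := hp
    obtain rfl : x = (s, n) := by simpa using hhead
    cases q with
    | nil =>
      obtain ⟨rfl, rfl⟩ : s = s' ∧ n = 0 := by simpa using hlast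
      exact ⟨fun _ => s, fun k hk => absurd hk (Nat.not_lt_zero k), rfl, rfl, rfl⟩
    | cons y q =>
      replace hchain : ((s, n) :: y :: q).IsChain LatticeEdge := hchain
      rw [List.isChain_cons_cons] at hchain
      obtain ⟨⟨hn, hy⟩, hchain⟩ := hchain
      obtain ⟨m, rfl⟩ : ∃ m, n = m + 1 := ⟨n - 1, by omega⟩
      have hy2 : y.2 = m := by rcases hy with rfl | rfl <;> rfl
      obtain ⟨g, hg, hgm, hg0, hq⟩ := ih (n := m) (s := y.1)
        ⟨by simp [← hy2], by rwa [List.getLast?_cons_cons] at hlast, hchain⟩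
      refine ⟨Function.update g (m + 1) s, fun k hk => ?_, by simp, ?_, ?_⟩
      · rcases Nat.lt_or_ge k m with hkm | hkm
        · simp only [Function.update_of_ne (show k + 1 ≠ m + 1 by omega),
            Function.update_of_ne (show k ≠ m + 1 by omega)]
          exact hg k hkm
        · obtain rfl : k = m := by omega
          simp only [Function.update_self, Function.update_of_ne (show k ≠ k + 1 by omega), hgm]
          rcases hy with rfl | rfl
          · exact Or.inl rfl
          · exact Or.inr (by simp)
      · rwa [Function.update_of_ne (by omega)]
      · have htail : stepPath (Function.update g (m + 1) s) m = stepPath g m :=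
          stepPath_eq_stepPath_iff.2 fun k hk => Function.update_of_ne (by omega) _ _
        rw [stepPath, Function.update_self, htail, ← hq]

lemma pathWt_stepPath (z : ℕ → R) (b : ℤ → R) (g : ℕ → ℤ) (n : ℕ) :
    pathWt z b (stepPath g n) = ∏ k ∈ range n, edgeWt z b (g (k + 1), k + 1) (g k, k) := by
  induction n with
  | zero => simp [stepPath, pathWt]
  | succ n ih =>
    obtain ⟨l, hl⟩ := stepPath_eq_cons g n
    rw [prod_range_succ, ← ih, stepPath, hl]
    simp only [pathWt, List.tail_cons, List.zip_cons_cons, List.map_cons, List.prod_cons]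
    ring

end StepPath

structure IsStrictRow (a b f : ℕ) (e : ℕ → ℕ) : Prop where
  one_le : ∀ c ∈ Ioc a b, 1 ≤ e c
  le_flag : ∀ c ∈ Ioc a b, e c ≤ f
  strictMonoOn : StrictMonoOn e (Set.Ioc a b)

/-- The horizontal position at height `h` of the path encoding a row with boxes `a < c ≤ b`. -/
def rowProfile (a b : ℕ) (e : ℕ → ℕ) (h : ℕ) : ℤ := a + #{c ∈ Ioc a b | e c ≤ h}

section Rows

variable {a b f : ℕ} {e : ℕ → ℕ}

lemma rowProfile_congr {e' : ℕ → ℕ} (he : ∀ c ∈ Ioc a b, e c = e' c) :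
    rowProfile a b e = rowProfile a b e' := by
  ext h
  rw [rowProfile, rowProfile, filter_congr fun c hc => by rw [he c hc]]

lemma le_rowProfile (h : ℕ) : (a : ℤ) ≤ rowProfile a b e h := by
  simp [rowProfile]

lemma rowProfile_le (h : ℕ) : rowProfile a b e h ≤ a + (b - a : ℕ) := by
  have := card_le_card (filter_subset (fun c => e c ≤ h) (Ioc a b))
  rw [Nat.card_Ioc] at this
  simp only [rowProfile]
  omega

namespace IsStrictRow

lemma congr {e' : ℕ → ℕ} (hr : IsStrictRow a b f e)
    (he : ∀ c ∈ Ioc a b, e c = e' c) : IsStrictRow a b f e' where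
  one_le c hc := he c hc ▸ hr.one_le c hc
  le_flag c hc := he c hc ▸ hr.le_flag c hc
  strictMonoOn := hr.strictMonoOn.congr fun c hc => he c (by rwa [← coe_Ioc] at hc)

variable (hr : IsStrictRow a b f e)
include hr

/-- The Galois connection between a row and its path, from which the other facts relating them
are read off. -/
lemma le_iff_le_rowProfile {c : ℕ} (hc : c ∈ Ioc a b) (h : ℕ) :
    e c ≤ h ↔ (c : ℤ) ≤ rowProfile a b e h := by
  have hc' := mem_Ioc.1 hc
  constructor
  · intro hle
    have hsub : Ioc a c ⊆ {c' ∈ Ioc a b | e c' ≤ h} := fun c' hc'' => by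
      have := mem_Ioc.1 hc''
      refine mem_filter.2 ⟨mem_Ioc.2 ⟨this.1, this.2.trans hc'.2⟩, le_trans ?_ hle⟩
      exact hr.strictMonoOn.monotoneOn ⟨this.1, this.2.trans hc'.2⟩ ⟨hc'.1, hc'.2⟩ this.2
    have := card_le_card hsub
    rw [Nat.card_Ioc] at this
    simp only [rowProfile]
    omega
  · intro hle
    by_contra hlt
    have hsub : {c' ∈ Ioc a b | e c' ≤ h} ⊆ Ioc a (c - 1) := fun c' hc'' => by
      obtain ⟨hc'', hle'⟩ := mem_filter.1 hc''
      have := mem_Ioc.1 hc''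
      refine mem_Ioc.2 ⟨this.1, Nat.le_sub_one_of_lt (not_le.1 fun hcc => hlt ?_)⟩
      exact hle'.trans' (hr.strictMonoOn.monotoneOn ⟨hc'.1, hc'.2⟩ ⟨this.1, this.2⟩ hcc)
    have := card_le_card hsub
    rw [Nat.card_Ioc] at this
    simp only [rowProfile] at hle
    omega

lemma rowProfile_zero : rowProfile a b e 0 = a := by
  have : {c ∈ Ioc a b | e c ≤ 0} = ∅ :=
    filter_eq_empty_iff.2 fun c hc => by have := hr.one_le c hc; omega
  rw [rowProfile, this, card_empty, Nat.cast_zero, add_zero]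

lemma rowProfile_flag (hab : a ≤ b) : rowProfile a b e f = b := by
  rw [rowProfile, filter_true_of_mem hr.le_flag, Nat.card_Ioc]
  omega

lemma isUnitStep (n : ℕ) : IsUnitStep (rowProfile a b e) n := by
  intro k _
  have hmono : #{c ∈ Ioc a b | e c ≤ k} ≤ #{c ∈ Ioc a b | e c ≤ k + 1} :=
    card_le_card fun c hc => by
      simp only [mem_filter] at hc ⊢
      exact ⟨hc.1, by omega⟩
  have hsub : {c ∈ Ioc a b | e c ≤ k + 1} ⊆
      {c ∈ Ioc a b | e c ≤ k} ∪ {c ∈ Ioc a b | e c = k + 1} := fun c hc => by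
    simp only [mem_filter, mem_union] at hc ⊢
    rcases hc.2.lt_or_eq with hlt | heq
    · exact Or.inl ⟨hc.1, by omega⟩
    · exact Or.inr ⟨hc.1, heq⟩
  have hone : #{c ∈ Ioc a b | e c = k + 1} ≤ 1 := card_le_one.2 fun c hc c' hc' => by
    simp only [mem_filter] at hc hc'
    exact hr.strictMonoOn.injOn (coe_Ioc a b ▸ hc.1) (coe_Ioc a b ▸ hc'.1)
      (hc.2.trans hc'.2.symm)
  have := (card_le_card hsub).trans (card_union_le _ _)
  simp only [rowProfile]
  omega

lemma rowProfile_entry {c : ℕ} (hc : c ∈ Ioc a b) :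
    rowProfile a b e (e c) = c ∧ rowProfile a b e (e c - 1) = c - 1 := by
  have hge := (hr.le_iff_le_rowProfile hc (e c)).1 le_rfl
  have hlt : ¬ (c : ℤ) ≤ rowProfile a b e (e c - 1) :=
    fun h => by have := (hr.le_iff_le_rowProfile hc _).2 h; have := hr.one_le c hc; omega
  have hstep := hr.isUnitStep (e c) (e c - 1) (by have := hr.one_le c hc; omega)
  rw [Nat.sub_add_cancel (hr.one_le c hc)] at hstep
  omega

lemma eqOn_of_rowProfile_eq {e' : ℕ → ℕ} (hr' : IsStrictRow a b f e')
    (h : ∀ k ≤ f, rowProfile a b e k = rowProfile a b e' k) :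
    ∀ c ∈ Ioc a b, e c = e' c := by
  intro c hc
  apply le_antisymm
  · rw [hr.le_iff_le_rowProfile hc, h _ (hr'.le_flag c hc), ← hr'.le_iff_le_rowProfile hc]
  · rw [hr'.le_iff_le_rowProfile hc, ← h _ (hr.le_flag c hc), ← hr.le_iff_le_rowProfile hc]

lemma rowProfile_le_rowProfile {a' b' f' : ℕ} {e' : ℕ → ℕ} (hr' : IsStrictRow a' b' f' e')
    (ha : a' ≤ a) (hb : b' ≤ b)
    (hcol : ∀ c, a < c → c ≤ b' → e c ≤ e' c) (h : ℕ) :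
    rowProfile a' b' e' h ≤ rowProfile a b e h := by
  set c := a' + #{c ∈ Ioc a' b' | e' c ≤ h}
  have hcZ : (c : ℤ) = rowProfile a' b' e' h := by simp [c, rowProfile]
  rcases le_or_gt c a with hca | hac
  · have := le_rowProfile (a := a) (b := b) (e := e) h
    omega
  have hc' : c ∈ Ioc a' b' := by
    have := rowProfile_le (a := a') (b := b') (e := e') h
    exact mem_Ioc.2 ⟨by omega, by omega⟩
  have hle' := (hr'.le_iff_le_rowProfile hc' h).2 hcZ.le
  have hc : c ∈ Ioc a b := mem_Ioc.2 ⟨hac, (mem_Ioc.1 hc').2.trans hb⟩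
  rw [← hcZ]
  exact (hr.le_iff_le_rowProfile hc h).1 ((hcol c hac (mem_Ioc.1 hc').2).trans hle')

lemma edgeWt_entry (z : ℕ → R) (w : ℤ → R) (s : ℤ) {c : ℕ} (hc : c ∈ Ioc a b) :
    edgeWt z w (rowProfile a b e (e c - 1 + 1) - s, e c - 1 + 1)
      (rowProfile a b e (e c - 1) - s, e c - 1) = z (e c) + w ((e c : ℤ) + s - c) := by
  obtain ⟨hrow, hrow'⟩ := hr.rowProfile_entry hc
  have he := hr.one_le c hc
  rw [Nat.sub_add_cancel he, hrow, hrow', edgeWt, if_pos (by ring)]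
  congr 2
  ring

lemma prod_eq_pathWt (z : ℕ → R) (w : ℤ → R) (s : ℤ) :
    ∏ j ∈ range (b - a),
        (z (e (a + 1 + j)) + w ((e (a + 1 + j) : ℤ) + s - ((a : ℤ) + 1 + (j : ℤ)))) =
      pathWt z w (stepPath (fun h => rowProfile a b e h - s) f) := by
  have hmem {j : ℕ} (hj : j ∈ range (b - a)) : a + 1 + j ∈ Ioc a b :=
    mem_Ioc.2 ⟨by omega, by have := mem_range.1 hj; omega⟩
  have hterm {j : ℕ} (hj : j ∈ range (b - a)) :
      z (e (a + 1 + j)) + w ((e (a + 1 + j) : ℤ) + s - ((a : ℤ) + 1 + (j : ℤ))) =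
        edgeWt z w (rowProfile a b e (e (a + 1 + j) - 1 + 1) - s, e (a + 1 + j) - 1 + 1)
          (rowProfile a b e (e (a + 1 + j) - 1) - s, e (a + 1 + j) - 1) := by
    rw [hr.edgeWt_entry z w s (hmem hj)]
    push_cast
    ring_nf
  rw [pathWt_stepPath]
  refine prod_bij_ne_one (fun j _ _ => e (a + 1 + j) - 1) (fun j hj _ => ?_)
    (fun j hj _ j' hj' _ hjj' => ?_) (fun k hk hne => ?_) (fun j hj _ => hterm hj)
  · have := hr.one_le _ (hmem hj)
    have := hr.le_flag _ (hmem hj)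
    exact mem_range.2 (by omega)
  · have := hr.one_le _ (hmem hj)
    have := hr.one_le _ (hmem hj')
    have := hr.strictMonoOn.injOn (coe_Ioc a b ▸ hmem hj) (coe_Ioc a b ▸ hmem hj')
      (by omega : e (a + 1 + j) = e (a + 1 + j'))
    omega
  · have hdiag : rowProfile a b e (k + 1) = rowProfile a b e k + 1 := by
      by_contra hnd
      exact hne (if_neg fun h => hnd (by simp only at h; omega))
    set c := a + #{c ∈ Ioc a b | e c ≤ k + 1}
    have hcZ : (c : ℤ) = rowProfile a b e (k + 1) := by simp [c, rowProfile]
    have hcmem : c ∈ Ioc a b := by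
      have := le_rowProfile (a := a) (b := b) (e := e) k
      have := rowProfile_le (a := a) (b := b) (e := e) (k + 1)
      exact mem_Ioc.2 ⟨by omega, by omega⟩
    have h₁ := (hr.le_iff_le_rowProfile hcmem (k + 1)).2 hcZ.le
    have h₂ := mt (hr.le_iff_le_rowProfile hcmem k).1 (by omega)
    have hj : c - a - 1 ∈ range (b - a) := mem_range.2 (by have := mem_Ioc.1 hcmem; omega)
    have hcol : a + 1 + (c - a - 1) = c := by have := mem_Ioc.1 hcmem; omega
    have hk : e c - 1 = k := by omega
    refine ⟨c - a - 1, hj, ?_, by rw [hcol, hk]⟩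
    rwa [hterm hj, hcol, hk]

end IsStrictRow

end Rows

def rowOfProfile (g : ℕ → ℤ) (c : ℕ) : ℕ := sInf {k | (c : ℤ) ≤ g k}

namespace IsUnitStep

variable {g : ℕ → ℤ} {f c : ℕ}

lemma rowOfProfile_le_iff (hg : IsUnitStep g f) (hc : (c : ℤ) ≤ g f) {k : ℕ} (hk : k ≤ f) :
    rowOfProfile g c ≤ k ↔ (c : ℤ) ≤ g k := by
  have hf : f ∈ {k | (c : ℤ) ≤ g k} := hc
  refine ⟨fun h => ?_, fun h => Nat.sInf_le h⟩
  exact (Nat.sInf_mem ⟨f, hf⟩ : (c : ℤ) ≤ g (rowOfProfile g c)).trans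
    (hg.monotoneOn (Nat.sInf_le hf) hk h)

lemma rowOfProfile_mem_Icc (hg : IsUnitStep g f) (hc₀ : g 0 < c) (hc : (c : ℤ) ≤ g f) :
    rowOfProfile g c ∈ Set.Icc 1 f := by
  refine ⟨Nat.one_le_iff_ne_zero.2 fun h0 => ?_, (hg.rowOfProfile_le_iff hc le_rfl).2 hc⟩
  have := (hg.rowOfProfile_le_iff hc (Nat.zero_le f)).1 h0.le
  omega

lemma apply_rowOfProfile (hg : IsUnitStep g f) (hc₀ : g 0 < c) (hc : (c : ℤ) ≤ g f) :
    g (rowOfProfile g c) = c := by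
  obtain ⟨h1, hf⟩ := hg.rowOfProfile_mem_Icc hc₀ hc
  have hge := (hg.rowOfProfile_le_iff hc hf).1 le_rfl
  have hlt := mt (hg.rowOfProfile_le_iff hc (k := rowOfProfile g c - 1) (by omega)).2 (by omega)
  have := hg (rowOfProfile g c - 1) (by omega)
  rw [Nat.sub_add_cancel h1] at this
  omega

variable {a b : ℕ}

lemma isStrictRow_rowOfProfile (hg : IsUnitStep g f) (hg₀ : g 0 = a) (hgf : g f = b) :
    IsStrictRow a b f (rowOfProfile g) := by
  have hbounds {c : ℕ} (hc : c ∈ Ioc a b) : g 0 < c ∧ (c : ℤ) ≤ g f := by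
    have := mem_Ioc.1 hc
    omega
  refine ⟨fun c hc => (hg.rowOfProfile_mem_Icc (hbounds hc).1 (hbounds hc).2).1,
    fun c hc => (hg.rowOfProfile_mem_Icc (hbounds hc).1 (hbounds hc).2).2,
    fun c hc c' hc' hcc' => ?_⟩
  rw [← coe_Ioc, mem_coe] at hc hc'
  by_contra hle
  have := (hg.rowOfProfile_le_iff (hbounds hc').2
    (hg.rowOfProfile_mem_Icc (hbounds hc).1 (hbounds hc).2).2).1 (not_lt.1 hle)
  rw [hg.apply_rowOfProfile (hbounds hc).1 (hbounds hc).2] at this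
  omega

lemma rowProfile_rowOfProfile (hg : IsUnitStep g f) (hg₀ : g 0 = a) (hgf : g f = b) {k : ℕ}
    (hk : k ≤ f) : rowProfile a b (rowOfProfile g) k = g k := by
  have hlo : (a : ℤ) ≤ g k := hg₀ ▸ hg.monotoneOn (Nat.zero_le f) hk (Nat.zero_le k)
  have hhi : g k ≤ b := hgf ▸ hg.monotoneOn hk (le_refl f) hk
  have hfilter : {c ∈ Ioc a b | rowOfProfile g c ≤ k} = Ioc a (g k).toNat := by
    ext c
    simp only [mem_filter, mem_Ioc]
    constructor
    · rintro ⟨hc, hle⟩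
      have := (hg.rowOfProfile_le_iff (by omega) hk).1 hle
      omega
    · rintro hc
      exact ⟨⟨hc.1, by omega⟩, (hg.rowOfProfile_le_iff (by omega) hk).2 (by omega)⟩
  rw [rowProfile, hfilter, Nat.card_Ioc]
  omega

end IsUnitStep

/-- The profile of the path of row `i`, shifted by `-i` so that it runs from `(λ_i - i, f_i)` to
`(μ_i - i, 0)`. -/
def tableauProfile (lam mu : ℕ → ℕ) (t : ℕ × ℕ → ℕ) (i h : ℕ) : ℤ :=
  rowProfile (mu i) (lam i) (fun c => t (i, c)) h - i

def tableauPaths (r : ℕ) (lam mu f : ℕ → ℕ) (t : ℕ × ℕ → ℕ) (j : Fin r) :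
    List (ℤ × ℕ) :=
  stepPath (tableauProfile lam mu t (j + 1)) (f (j + 1))

def nonintersectingPaths (r : ℕ) (lam mu f : ℕ → ℕ) : Set (Fin r → List (ℤ × ℕ)) :=
  {P | (∀ i : Fin r,
      IsLatticePath ((lam ((i : ℕ) + 1) : ℤ) - ((i : ℕ) + 1 : ℕ), f ((i : ℕ) + 1))
        ((mu ((i : ℕ) + 1) : ℤ) - ((i : ℕ) + 1 : ℕ), 0) (P i)) ∧
    (∀ i j : Fin r, i ≠ j → (P i).Disjoint (P j))}

section Tableaux

variable {r : ℕ} {lam mu f : ℕ → ℕ} {t : ℕ × ℕ → ℕ}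

lemma antitoneOn_Icc_of_succ_le {u : ℕ → ℕ}
    (hu : ∀ i, 1 ≤ i → i < r → u (i + 1) ≤ u i) : AntitoneOn u (Set.Icc 1 r) :=
  antitoneOn_of_succ_le Set.ordConnected_Icc fun i _ hi hi' => by
    rw [Order.succ_eq_add_one] at hi' ⊢
    exact hu i hi.1 (by have := hi'.2; omega)

lemma mem_skewDiag_of_le_of_le (hlam : ∀ i, 1 ≤ i → i < r → lam (i + 1) ≤ lam i)
    (hmu : ∀ i, 1 ≤ i → i < r → mu (i + 1) ≤ mu i) {i i' j c : ℕ}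
    (hi : (i, c) ∈ skewDiag r lam mu) (hi' : (i', c) ∈ skewDiag r lam mu) (hij : i ≤ j)
    (hji' : j ≤ i') : (j, c) ∈ skewDiag r lam mu := by
  obtain ⟨hi1, -, hmuc, -⟩ := hi
  obtain ⟨-, hi'r, -, hclam⟩ := hi'
  have hj : j ∈ Set.Icc 1 r := ⟨by omega, by omega⟩
  exact ⟨hj.1, hj.2, (antitoneOn_Icc_of_succ_le hmu ⟨hi1, by omega⟩ hj hij).trans_lt hmuc,
    hclam.trans (antitoneOn_Icc_of_succ_le hlam hj ⟨by omega, hi'r⟩ hji')⟩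

lemma IsRST.isStrictRow (ht : IsRST r lam mu f t) {i : ℕ} (hi : 1 ≤ i) (hir : i ≤ r) :
    IsStrictRow (mu i) (lam i) (f i) (fun c => t (i, c)) where
  one_le c hc := ht.2.1 (i, c) ⟨hi, hir, (mem_Ioc.1 hc).1, (mem_Ioc.1 hc).2⟩
  le_flag c hc := ht.2.2.2.2 (i, c) ⟨hi, hir, (mem_Ioc.1 hc).1, (mem_Ioc.1 hc).2⟩
  strictMonoOn c hc c' hc' := ht.2.2.1 i c c' ⟨hi, hir, hc.1, hc.2⟩ ⟨hi, hir, hc'.1, hc'.2⟩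

/-- The skew diagram is convex in each column, so the column condition need only be checked
between adjacent rows. -/
lemma isRST_of_isStrictRow (hlam : ∀ i, 1 ≤ i → i < r → lam (i + 1) ≤ lam i)
    (hmu : ∀ i, 1 ≤ i → i < r → mu (i + 1) ≤ mu i)
    (hoff : ∀ p ∉ skewDiag r lam mu, t p = 0)
    (hrow : ∀ i, 1 ≤ i → i ≤ r → IsStrictRow (mu i) (lam i) (f i) (fun c => t (i, c)))
    (hcol : ∀ i c, (i, c) ∈ skewDiag r lam mu → (i + 1, c) ∈ skewDiag r lam mu →
      t (i, c) ≤ t (i + 1, c)) :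
    IsRST r lam mu f t := by
  refine ⟨hoff, fun p hp => ?_, fun i c c' hc hc' hcc' => ?_, fun i i' c hc hc' hii' => ?_,
    fun p hp => ?_⟩
  · exact (hrow p.1 hp.1 hp.2.1).one_le p.2 (mem_Ioc.2 ⟨hp.2.2.1, hp.2.2.2⟩)
  · exact (hrow i hc.1 hc.2.1).strictMonoOn ⟨hc.2.2.1, hc.2.2.2⟩ ⟨hc'.2.2.1, hc'.2.2.2⟩
      hcc'
  · have hmem {j : ℕ} (hj : j ∈ Set.Icc i i') : (j, c) ∈ skewDiag r lam mu :=
      mem_skewDiag_of_le_of_le hlam hmu hc hc' hj.1 hj.2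
    refine monotoneOn_of_le_succ (f := fun j => t (j, c)) Set.ordConnected_Icc
      (fun j _ hj hj' => ?_) ⟨le_rfl, hii'⟩ ⟨hii', le_rfl⟩ hii'
    rw [Order.succ_eq_add_one] at hj' ⊢
    exact hcol j c (hmem hj) (hmem hj')
  · exact (hrow p.1 hp.1 hp.2.1).le_flag p.2 (mem_Ioc.2 ⟨hp.2.2.1, hp.2.2.2⟩)

namespace IsRST

variable (ht : IsRST r lam mu f t)
include ht

lemma isUnitStep_tableauProfile {i : ℕ} (hi : 1 ≤ i) (hir : i ≤ r) :
    IsUnitStep (tableauProfile lam mu t i) (f i) := fun k hk => by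
  simp only [tableauProfile]
  rcases (ht.isStrictRow hi hir).isUnitStep _ k hk with h | h <;> omega

lemma tableauProfile_succ_lt (hlam : ∀ i, 1 ≤ i → i < r → lam (i + 1) ≤ lam i)
    (hmu : ∀ i, 1 ≤ i → i < r → mu (i + 1) ≤ mu i) {i : ℕ} (hi : 1 ≤ i) (hir : i < r)
    (h : ℕ) : tableauProfile lam mu t (i + 1) h < tableauProfile lam mu t i h := by
  have hcol (c : ℕ) (hc : mu i < c) (hc' : c ≤ lam (i + 1)) : t (i, c) ≤ t (i + 1, c) :=
    ht.2.2.2.1 i (i + 1) c ⟨hi, hir.le, hc, hc'.trans (hlam i hi hir)⟩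
      ⟨by omega, hir, (hmu i hi hir).trans_lt hc, hc'⟩ (by omega)
  have := (ht.isStrictRow hi hir.le).rowProfile_le_rowProfile
    (ht.isStrictRow (i := i + 1) (by omega) hir) (hmu i hi hir) (hlam i hi hir) hcol h
  simp only [tableauProfile]
  push_cast
  omega

lemma tableauProfile_lt (hlam : ∀ i, 1 ≤ i → i < r → lam (i + 1) ≤ lam i)
    (hmu : ∀ i, 1 ≤ i → i < r → mu (i + 1) ≤ mu i) {i i' : ℕ} (hi : 1 ≤ i)
    (hii' : i < i') (hi'r : i' ≤ r) (h : ℕ) :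
    tableauProfile lam mu t i' h < tableauProfile lam mu t i h := by
  refine strictAntiOn_of_succ_lt (f := fun i => tableauProfile lam mu t i h) Set.ordConnected_Icc
    (fun k _ hk hk' => ?_) ⟨hi, by omega⟩ ⟨by omega, hi'r⟩ hii'
  rw [Order.succ_eq_add_one] at hk' ⊢
  exact ht.tableauProfile_succ_lt hlam hmu hk.1 (by have := hk'.2; omega) h

lemma mem_nonintersectingPaths (hlam : ∀ i, 1 ≤ i → i < r → lam (i + 1) ≤ lam i)
    (hmu : ∀ i, 1 ≤ i → i < r → mu (i + 1) ≤ mu i)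
    (hsub : ∀ i, 1 ≤ i → i ≤ r → mu i ≤ lam i) :
    tableauPaths r lam mu f t ∈ nonintersectingPaths r lam mu f := by
  refine ⟨fun j => ?_, fun j j' hjj' => ?_⟩
  · have hrow := ht.isStrictRow (i := j + 1) (by omega) j.isLt
    have := isLatticePath_stepPath (ht.isUnitStep_tableauProfile (i := j + 1) (by omega) j.isLt)
    rwa [tableauProfile, tableauProfile, hrow.rowProfile_flag (hsub _ (by omega) j.isLt),
      hrow.rowProfile_zero] at this
  · wlog hlt : j < j' generalizing j j'
    · exact fun x hx hx' => this j' j hjj'.symm (lt_of_le_of_ne (not_lt.1 hlt) hjj'.symm) hx' hx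
    exact stepPath_disjoint_iff.2 fun k _ _ => (ht.tableauProfile_lt hlam hmu (by omega)
      (by simpa using hlt) j'.isLt k).ne'

lemma rstWeight_eq (z : ℕ → R) (b : ℤ → R) :
    rstWeight r lam mu z b t = ∏ j : Fin r, pathWt z b (tableauPaths r lam mu f t j) := by
  rw [rstWeight, ← Fin.prod_univ_eq_prod_range]
  refine prod_congr rfl fun j _ => ?_
  rw [(ht.isStrictRow (i := j + 1) (by omega) j.isLt).prod_eq_pathWt z b ((j : ℤ) + 1),
    tableauPaths]
  rfl

end IsRST

lemma tableauPaths_mk_sub_one (t : ℕ × ℕ → ℕ) {i : ℕ} (hi : 1 ≤ i) (hir : i ≤ r) :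
    tableauPaths r lam mu f t ⟨i - 1, by omega⟩ =
      stepPath (tableauProfile lam mu t i) (f i) := by
  simp only [tableauPaths, Nat.sub_add_cancel hi]

lemma injOn_tableauPaths : Set.InjOn (tableauPaths r lam mu f) {t | IsRST r lam mu f t} := by
  intro t ht t' ht' heq
  ext ⟨i, c⟩
  by_cases hp : (i, c) ∈ skewDiag r lam mu
  · obtain ⟨hi, hir, hc, hc'⟩ : 1 ≤ i ∧ i ≤ r ∧ mu i < c ∧ c ≤ lam i := hp
    have hpath := congrFun heq ⟨i - 1, by omega⟩
    rw [tableauPaths_mk_sub_one t hi hir, tableauPaths_mk_sub_one t' hi hir,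
      stepPath_eq_stepPath_iff] at hpath
    refine (ht.isStrictRow hi hir).eqOn_of_rowProfile_eq (ht'.isStrictRow hi hir)
      (fun k hk => ?_) c (mem_Ioc.2 ⟨hc, hc'⟩)
    have := hpath k hk
    simp only [tableauProfile] at this
    omega
  · rw [ht.1 _ hp, ht'.1 _ hp]

lemma exists_isRST_of_profiles (hlam : ∀ i, 1 ≤ i → i < r → lam (i + 1) ≤ lam i)
    (hmu : ∀ i, 1 ≤ i → i < r → mu (i + 1) ≤ mu i) (G : ℕ → ℕ → ℤ)
    (hG : ∀ i, 1 ≤ i → i ≤ r →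
      IsUnitStep (G i) (f i) ∧ G i 0 = mu i - i ∧ G i (f i) = lam i - i)
    (hord : ∀ i, 1 ≤ i → i < r → ∀ k ≤ f i, k ≤ f (i + 1) → G (i + 1) k < G i k) :
    ∃ t, IsRST r lam mu f t ∧
      ∀ i, 1 ≤ i → i ≤ r → ∀ k ≤ f i, tableauProfile lam mu t i k = G i k := by
  classical
  set g : ℕ → ℕ → ℤ := fun i k => G i k + i
  have hg (i : ℕ) (hi : 1 ≤ i) (hir : i ≤ r) :
      IsUnitStep (g i) (f i) ∧ g i 0 = mu i ∧ g i (f i) = lam i := by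
    obtain ⟨h₁, h₂, h₃⟩ := hG i hi hir
    exact ⟨h₁.add_const _, by simp [g, h₂], by simp [g, h₃]⟩
  set t : ℕ × ℕ → ℕ := fun p =>
    if p ∈ skewDiag r lam mu then rowOfProfile (g p.1) p.2 else 0
  have ht {i c : ℕ} (hp : (i, c) ∈ skewDiag r lam mu) : t (i, c) = rowOfProfile (g i) c :=
    if_pos hp
  have hrow {i : ℕ} (hi : 1 ≤ i) (hir : i ≤ r) :
      ∀ c ∈ Ioc (mu i) (lam i), rowOfProfile (g i) c = t (i, c) := fun c hc =>
    (ht ⟨hi, hir, (mem_Ioc.1 hc).1, (mem_Ioc.1 hc).2⟩).symm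
  refine ⟨t, isRST_of_isStrictRow hlam hmu (fun p hp => if_neg hp) (fun i hi hir => ?_)
    (fun i c hp hp' => ?_), fun i hi hir k hk => ?_⟩
  · obtain ⟨hgi, hgi₀, hgif⟩ := hg i hi hir
    exact (hgi.isStrictRow_rowOfProfile hgi₀ hgif).congr (hrow hi hir)
  · rw [ht hp, ht hp']
    obtain ⟨hi, hir, hc, hc'⟩ : 1 ≤ i ∧ i ≤ r ∧ mu i < c ∧ c ≤ lam i := hp
    obtain ⟨-, hir', hc₁, hc₁'⟩ :
      1 ≤ i + 1 ∧ i + 1 ≤ r ∧ mu (i + 1) < c ∧ c ≤ lam (i + 1) := hp'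
    obtain ⟨hgi, hgi₀, hgif⟩ := hg i hi hir
    obtain ⟨hgi', hgi₀', hgif'⟩ := hg (i + 1) (by omega) hir'
    obtain ⟨-, hk⟩ := hgi'.rowOfProfile_mem_Icc (c := c) (by omega) (by omega)
    rcases le_or_gt (rowOfProfile (g (i + 1)) c) (f i) with hkf | hkf
    · rw [hgi.rowOfProfile_le_iff (by omega) hkf]
      have := hord i hi hir' _ hkf hk
      have := hgi'.apply_rowOfProfile (c := c) (by omega) (by omega)
      simp only [g] at *
      omega
    · exact (hgi.rowOfProfile_mem_Icc (c := c) (by omega) (by omega)).2.trans hkf.le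
  · obtain ⟨hgi, hgi₀, hgif⟩ := hg i hi hir
    rw [tableauProfile, ← rowProfile_congr (hrow hi hir),
      hgi.rowProfile_rowOfProfile hgi₀ hgif hk]
    simp [g]

lemma exists_profiles_of_mem_nonintersectingPaths
    (hmu : ∀ i, 1 ≤ i → i < r → mu (i + 1) ≤ mu i) {P : Fin r → List (ℤ × ℕ)}
    (hP : P ∈ nonintersectingPaths r lam mu f) :
    ∃ G : ℕ → ℕ → ℤ,
      (∀ i, 1 ≤ i → i ≤ r →
        IsUnitStep (G i) (f i) ∧ G i 0 = mu i - i ∧ G i (f i) = lam i - i) ∧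
      (∀ i, 1 ≤ i → i < r → ∀ k ≤ f i, k ≤ f (i + 1) → G (i + 1) k < G i k) ∧
      ∀ i (hi : 1 ≤ i) (hir : i ≤ r), P ⟨i - 1, by omega⟩ = stepPath (G i) (f i) := by
  obtain ⟨hpath, hdisj⟩ := hP
  have hpath' (i : ℕ) (hi : 1 ≤ i) (hir : i ≤ r) :
      IsLatticePath ((lam i : ℤ) - i, f i) ((mu i : ℤ) - i, 0) (P ⟨i - 1, by omega⟩) := by
    have := hpath ⟨i - 1, by omega⟩
    simp only [Nat.sub_add_cancel hi] at this
    exact this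
  choose! G hG hGf hG₀ hPG using fun i hi hir =>
    exists_unitStep_of_isLatticePath (hpath' i hi hir)
  refine ⟨G, fun i hi hir => ⟨hG i hi hir, hG₀ i hi hir, hGf i hi hir⟩,
    fun i hi hir k hk hk' => ?_, hPG⟩
  have hdisj' := hdisj ⟨i - 1, by omega⟩ ⟨i, hir⟩
    (by simp only [ne_eq, Fin.mk.injEq]; omega)
  rw [hPG i hi hir.le, show (⟨i, hir⟩ : Fin r) = ⟨i + 1 - 1, by omega⟩ from rfl,
    hPG (i + 1) (by omega) hir, stepPath_disjoint_iff] at hdisj'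
  refine ((hG i hi hir.le).mono (min_le_left _ _)).lt_of_forall_ne
    ((hG (i + 1) (by omega) hir).mono (min_le_right _ _)) ?_ (fun k hk => ?_) k (le_min hk hk')
  · rw [hG₀ i hi hir.le, hG₀ (i + 1) (by omega) hir]
    have := hmu i hi hir
    push_cast
    omega
  · exact (hdisj' k (hk.trans (min_le_left _ _)) (hk.trans (min_le_right _ _))).symm

lemma surjOn_tableauPaths (hlam : ∀ i, 1 ≤ i → i < r → lam (i + 1) ≤ lam i)
    (hmu : ∀ i, 1 ≤ i → i < r → mu (i + 1) ≤ mu i) :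
    Set.SurjOn (tableauPaths r lam mu f) {t | IsRST r lam mu f t}
      (nonintersectingPaths r lam mu f) := by
  intro P hP
  obtain ⟨G, hG, hord, hPG⟩ := exists_profiles_of_mem_nonintersectingPaths hmu hP
  obtain ⟨t, ht, htG⟩ := exists_isRST_of_profiles hlam hmu G hG hord
  refine ⟨t, ht, funext fun j => ?_⟩
  rw [tableauPaths, stepPath_eq_stepPath_iff.2 fun k hk => htG _ (by omega) j.isLt k hk]
  exact (hPG _ (by omega) j.isLt).symm

end Tableaux

/-- Lattice path interpretation of row-strict flagged skew factorial Schur polynomials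
(Lindström–Gessel–Viennot setup):  with `u_i = (λ_i − i, f_i)` and `v_i = (μ_i − i, 0)`,
`s̃_{λ/μ,f}(z|b) = Σ_{(P_1,…,P_r)} ∏_i w(P_i)`, the sum over `r`-tuples of pairwise
vertex-disjoint directed paths `P_i` from `u_i` to `v_i`. -/
theorem statement_14 (R : Type*) [CommRing R] (r : ℕ) (lam mu f : ℕ → ℕ)
    (z : ℕ → R) (b : ℤ → R)
    (hlam : ∀ i, 1 ≤ i → i < r → lam (i + 1) ≤ lam i)
    (hmu : ∀ i, 1 ≤ i → i < r → mu (i + 1) ≤ mu i)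
    (hsub : ∀ i, 1 ≤ i → i ≤ r → mu i ≤ lam i) :
    sTilde r lam mu f z b =
      ∑ᶠ P ∈ {P : Fin r → List (ℤ × ℕ) |
          (∀ i : Fin r,
            IsLatticePath ((lam ((i : ℕ) + 1) : ℤ) - ((i : ℕ) + 1 : ℕ), f ((i : ℕ) + 1))
              ((mu ((i : ℕ) + 1) : ℤ) - ((i : ℕ) + 1 : ℕ), 0) (P i)) ∧
          (∀ i j : Fin r, i ≠ j → (P i).Disjoint (P j))},
        ∏ i : Fin r, pathWt z b (P i) :=
  finsum_mem_eq_of_bijOn (tableauPaths r lam mu f)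
    ⟨fun _ ht => IsRST.mem_nonintersectingPaths ht hlam hmu hsub, injOn_tableauPaths,
      surjOn_tableauPaths hlam hmu⟩
    fun _ ht => IsRST.rstWeight_eq ht z b
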